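/- Let γ > 0 and X ∈ Ŵ ∩ S with λ_1(X) > 0, and let F_γ(X) = P_Ŵ(X + γ·u_1(X) ⊗ u_1(X)) / ‖P_Ŵ(X + γ·u_1(X) ⊗ u_1(X))‖_F. Then: (a) 0 < λ_1(X) < ‖P_Ŵ(u_1(X) ⊗ u_1(X))‖_F if and only if λ_1(F_γ(X)) > λ_1(X); and (b) λ_1(X) = ‖P_Ŵ(u_1(X) ⊗ u_1(X))‖_F if and only if F_γ(X) = X. -/

import Mathlib

open Matrix

noncomputable def vnorm {d : ℕ} (v : Fin d → ℝ) : ℝ := Real.sqrt (∑ i, v i ^ 2)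

noncomputable def frobInner {d : ℕ} (M N : Matrix (Fin d) (Fin d) ℝ) : ℝ :=
  ∑ i, ∑ j, M i j * N i j

noncomputable def frobNorm {d : ℕ} (M : Matrix (Fin d) (Fin d) ℝ) : ℝ :=
  Real.sqrt (frobInner M M)

def IsOrthProjOn {d : ℕ} (V : Submodule ℝ (Matrix (Fin d) (Fin d) ℝ))
    (P : Matrix (Fin d) (Fin d) ℝ →ₗ[ℝ] Matrix (Fin d) (Fin d) ℝ) : Prop :=
  (∀ X, P X ∈ V) ∧ (∀ X ∈ V, P X = X) ∧ ∀ X Y, frobInner (P X) Y = frobInner X (P Y)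

noncomputable def hsNorm {d : ℕ}
    (T : Matrix (Fin d) (Fin d) ℝ →ₗ[ℝ] Matrix (Fin d) (Fin d) ℝ) : ℝ :=
  Real.sqrt (∑ i, ∑ j,
    frobInner (T (Matrix.single i j 1)) (T (Matrix.single i j 1)))

noncomputable def specNorm {d : ℕ} (M : Matrix (Fin d) (Fin d) ℝ) : ℝ :=
  sSup {r : ℝ | ∃ v : Fin d → ℝ, (∑ i, v i ^ 2) = 1 ∧ r = |dotProduct v (M.mulVec v)|}

noncomputable def lamTop {d : ℕ} (M : Matrix (Fin d) (Fin d) ℝ) : ℝ :=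
  sSup {r : ℝ | ∃ v : Fin d → ℝ, (∑ i, v i ^ 2) = 1 ∧ r = dotProduct v (M.mulVec v)}

def IsLocMaxSpec {d : ℕ} (V : Submodule ℝ (Matrix (Fin d) (Fin d) ℝ))
    (M : Matrix (Fin d) (Fin d) ℝ) : Prop :=
  M ∈ V ∧ frobNorm M ≤ 1 ∧
    ∃ ε > 0, ∀ X ∈ V, frobNorm X ≤ 1 → frobNorm (X - M) < ε → specNorm X ≤ specNorm M

/-!
Let `t = λ₁(X) = ⟪X, u ⊗ u⟫` and `B = P_Ŵ(u ⊗ u)`. Since `X ∈ Ŵ` and `P_Ŵ` is an orthogonal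
projection, `⟪X, B⟫ = t` and `⟪B, u ⊗ u⟫ = ‖B‖²`, so Cauchy–Schwarz gives `t ≤ ‖B‖`.
If `t < ‖B‖`, the Rayleigh quotient of `F_γ(X)` at `u` is
`(t + γ‖B‖²) / √(1 + 2γt + γ²‖B‖²) > t`. If `t = ‖B‖`, equality in Cauchy–Schwarz forces
`B = t X`, hence `F_γ(X) = X`. The two cases give both equivalences.
-/

open scoped RealInnerProductSpace

section Ascent

variable {E : Type*} [NormedAddCommGroup E] [InnerProductSpace ℝ E] {x a b : E} {γ : ℝ}

lemma norm_add_smul_sq_of_norm_eq_one (hx : ‖x‖ = 1) :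
    ‖x + γ • b‖ ^ 2 = 1 + 2 * γ * ⟪x, b⟫ + γ ^ 2 * ‖b‖ ^ 2 := by
  rw [norm_add_sq_real, hx, real_inner_smul_right, norm_smul, mul_pow, Real.norm_eq_abs, sq_abs]
  ring

lemma mul_sqrt_lt_of_lt {t c : ℝ} (hγ : 0 < γ) (ht : 0 < t) (htc : t < c) :
    t * √(1 + 2 * γ * t + γ ^ 2 * c ^ 2) < t + γ * c ^ 2 := by
  refine lt_of_pow_lt_pow_left₀ 2 (by positivity) ?_
  rw [mul_pow, Real.sq_sqrt (by positivity)]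
  have hgap : 0 < c ^ 2 - t ^ 2 := by nlinarith
  nlinarith [mul_pos (mul_pos hγ ht) hgap,
    mul_pos (mul_pos (pow_pos hγ 2) (pow_pos (ht.trans htc) 2)) hgap]

lemma lt_inner_normalize_add_smul (hx : ‖x‖ = 1) (hxa : ⟪x, a⟫ = ⟪x, b⟫) (hba : ⟪b, a⟫ = ‖b‖ ^ 2)
    (hγ : 0 < γ) (hpos : 0 < ⟪x, b⟫) (hlt : ⟪x, b⟫ < ‖b‖) :
    ⟪x, b⟫ < ⟪‖x + γ • b‖⁻¹ • (x + γ • b), a⟫ := by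
  have hnorm : ‖x + γ • b‖ = √(1 + 2 * γ * ⟪x, b⟫ + γ ^ 2 * ‖b‖ ^ 2) := by
    rw [← norm_add_smul_sq_of_norm_eq_one hx, Real.sqrt_sq (norm_nonneg _)]
  have hnorm_pos : 0 < ‖x + γ • b‖ := by rw [hnorm]; positivity
  rw [real_inner_smul_left, inner_add_left, real_inner_smul_left, hxa, hba, inv_mul_eq_div,
    lt_div_iff₀ hnorm_pos, hnorm]
  exact mul_sqrt_lt_of_lt hγ hpos hlt

lemma normalize_add_smul_eq_self (hx : ‖x‖ = 1) (hxb : ⟪x, b⟫ = ‖b‖) (hγ : 0 ≤ γ) :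
    ‖x + γ • b‖⁻¹ • (x + γ • b) = x := by
  have hb : ‖b‖ • x = b := by
    have h := inner_eq_norm_mul_iff_real.mp (by rw [hxb, hx, one_mul])
    rwa [hx, one_smul] at h
  have hscale : 0 < 1 + γ * ‖b‖ := by positivity
  have hsum : x + γ • b = (1 + γ * ‖b‖) • x := by rw [add_smul, one_smul, mul_smul, hb]
  rw [hsum, norm_smul, hx, mul_one, Real.norm_of_nonneg hscale.le, smul_smul,
    inv_mul_cancel₀ hscale.ne', one_smul]

end Ascent

section Frobenius

variable {d : ℕ}

def frobVec : Matrix (Fin d) (Fin d) ℝ →ₗ[ℝ] EuclideanSpace ℝ (Fin d × Fin d) where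
  toFun M := WithLp.toLp 2 fun p => M p.1 p.2
  map_add' _ _ := rfl
  map_smul' _ _ := rfl

@[simp]
lemma frobVec_apply (M : Matrix (Fin d) (Fin d) ℝ) (p : Fin d × Fin d) :
    frobVec M p = M p.1 p.2 :=
  rfl

lemma frobVec_injective : Function.Injective (frobVec (d := d)) :=
  fun M N h => by
    ext i j
    simpa using congr($h (i, j))

lemma frobInner_eq_inner (M N : Matrix (Fin d) (Fin d) ℝ) :
    frobInner M N = ⟪frobVec M, frobVec N⟫ := by
  simp [frobInner, PiLp.inner_apply, Fintype.sum_prod_type, mul_comm]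

lemma frobNorm_eq_norm (M : Matrix (Fin d) (Fin d) ℝ) : frobNorm M = ‖frobVec M‖ := by
  rw [frobNorm, frobInner_eq_inner, real_inner_self_eq_norm_sq, Real.sqrt_sq (norm_nonneg _)]

lemma dotProduct_mulVec_eq_frobInner (M : Matrix (Fin d) (Fin d) ℝ) (v : Fin d → ℝ) :
    v ⬝ᵥ M *ᵥ v = frobInner M (vecMulVec v v) := by
  simp only [dotProduct, mulVec, frobInner, vecMulVec_apply, Finset.mul_sum]
  exact Finset.sum_congr rfl fun i _ => Finset.sum_congr rfl fun j _ => by ring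

lemma frobNorm_vecMulVec_self {v : Fin d → ℝ} (hv : ∑ i, v i ^ 2 = 1) :
    frobNorm (vecMulVec v v) = 1 := by
  have h : frobInner (vecMulVec v v) (vecMulVec v v) = (∑ i, v i ^ 2) * ∑ j, v j ^ 2 := by
    simp only [frobInner, vecMulVec_apply, Finset.sum_mul_sum]
    exact Finset.sum_congr rfl fun i _ => Finset.sum_congr rfl fun j _ => by ring
  rw [frobNorm, h, hv, mul_one, Real.sqrt_one]

lemma lamTop_bddAbove (M : Matrix (Fin d) (Fin d) ℝ) :
    BddAbove {r : ℝ | ∃ v : Fin d → ℝ, (∑ i, v i ^ 2) = 1 ∧ r = v ⬝ᵥ M *ᵥ v} := by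
  refine ⟨frobNorm M, ?_⟩
  rintro r ⟨v, hv, rfl⟩
  calc v ⬝ᵥ M *ᵥ v = ⟪frobVec M, frobVec (vecMulVec v v)⟫ := by
        rw [dotProduct_mulVec_eq_frobInner, frobInner_eq_inner]
    _ ≤ frobNorm M * frobNorm (vecMulVec v v) := by
        rw [frobNorm_eq_norm, frobNorm_eq_norm]; exact real_inner_le_norm _ _
    _ = frobNorm M := by rw [frobNorm_vecMulVec_self hv, mul_one]

lemma frobInner_vecMulVec_le_lamTop (M : Matrix (Fin d) (Fin d) ℝ) {v : Fin d → ℝ}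
    (hv : ∑ i, v i ^ 2 = 1) : frobInner M (vecMulVec v v) ≤ lamTop M :=
  le_csSup (lamTop_bddAbove M) ⟨v, hv, (dotProduct_mulVec_eq_frobInner M v).symm⟩

lemma frobInner_vecMulVec_of_mulVec_eq_smul {M : Matrix (Fin d) (Fin d) ℝ} {v : Fin d → ℝ}
    {μ : ℝ} (hv : ∑ i, v i ^ 2 = 1) (hMv : M *ᵥ v = μ • v) :
    frobInner M (vecMulVec v v) = μ := by
  have hvv : v ⬝ᵥ v = 1 := by simpa [dotProduct, sq] using hv
  rw [← dotProduct_mulVec_eq_frobInner, hMv, dotProduct_smul, smul_eq_mul, hvv, mul_one]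

namespace IsOrthProjOn

variable {V : Submodule ℝ (Matrix (Fin d) (Fin d) ℝ)}
  {P : Matrix (Fin d) (Fin d) ℝ →ₗ[ℝ] Matrix (Fin d) (Fin d) ℝ}

lemma frobInner_apply_of_mem (hP : IsOrthProjOn V P) {X : Matrix (Fin d) (Fin d) ℝ} (hX : X ∈ V)
    (A : Matrix (Fin d) (Fin d) ℝ) : frobInner X (P A) = frobInner X A := by
  rw [← hP.2.2, hP.2.1 X hX]

lemma frobInner_apply_self (hP : IsOrthProjOn V P) (A : Matrix (Fin d) (Fin d) ℝ) :
    frobInner (P A) A = frobInner (P A) (P A) := by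
  rw [← hP.2.2, hP.2.1 _ (hP.1 A)]

end IsOrthProjOn

end Frobenius

theorem iteration_and_stopping_condition_general
    (d : ℕ) (γ : ℝ) (hγ : 0 < γ)
    (Wh : Submodule ℝ (Matrix (Fin d) (Fin d) ℝ))
    (PWh : Matrix (Fin d) (Fin d) ℝ →ₗ[ℝ] Matrix (Fin d) (Fin d) ℝ)
    (hPWh : IsOrthProjOn Wh PWh)
    (X : Matrix (Fin d) (Fin d) ℝ) (hX : X ∈ Wh) (hXS : frobNorm X = 1)
    (u : Fin d → ℝ) (hu : ∑ i, u i ^ 2 = 1)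
    (heig : X.mulVec u = lamTop X • u)
    (hpos : 0 < lamTop X)
    (Y : Matrix (Fin d) (Fin d) ℝ)
    (hY : Y = (frobNorm (PWh (X + γ • vecMulVec u u)))⁻¹ • PWh (X + γ • vecMulVec u u)) :
    ((0 < lamTop X ∧ lamTop X < frobNorm (PWh (vecMulVec u u))) ↔ lamTop X < lamTop Y) ∧
      (lamTop X = frobNorm (PWh (vecMulVec u u)) ↔ Y = X) := by
  set A := vecMulVec u u
  set x := frobVec X
  set a := frobVec A
  set b := frobVec (PWh A)
  have hx : ‖x‖ = 1 := by rw [← frobNorm_eq_norm, hXS]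
  have hxa : ⟪x, a⟫ = lamTop X := by
    rw [← frobInner_eq_inner, frobInner_vecMulVec_of_mulVec_eq_smul hu heig]
  have hxb : ⟪x, b⟫ = lamTop X := by
    rw [← frobInner_eq_inner, hPWh.frobInner_apply_of_mem hX, frobInner_eq_inner, hxa]
  have hba : ⟪b, a⟫ = ‖b‖ ^ 2 := by
    rw [← frobInner_eq_inner, hPWh.frobInner_apply_self, frobInner_eq_inner,
      real_inner_self_eq_norm_sq]
  have hY' : frobVec Y = ‖x + γ • b‖⁻¹ • (x + γ • b) := by
    rw [hY, map_add, map_smul, hPWh.2.1 X hX, frobNorm_eq_norm, map_smul, map_add, map_smul]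
  have hle : lamTop X ≤ ‖b‖ := by simpa [hx, hxb] using real_inner_le_norm x b
  rw [frobNorm_eq_norm]
  rcases hle.lt_or_eq with hlt | heq
  · have hrise : lamTop X < lamTop Y := calc
      lamTop X < ⟪frobVec Y, a⟫ := by
        rw [hY', ← hxb]
        exact lt_inner_normalize_add_smul hx (hxa.trans hxb.symm) hba hγ (hxb ▸ hpos) (hxb ▸ hlt)
      _ ≤ lamTop Y := by
        rw [← frobInner_eq_inner]
        exact frobInner_vecMulVec_le_lamTop Y hu
    refine ⟨iff_of_true ⟨hpos, hlt⟩ hrise, iff_of_false hlt.ne ?_⟩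
    rintro rfl
    exact lt_irrefl _ hrise
  · have hYX : Y = X :=
      frobVec_injective (hY'.trans (normalize_add_smul_eq_self hx (hxb.trans heq) hγ.le))
    subst hYX
    exact ⟨iff_of_false (fun h => h.2.ne heq) (lt_irrefl _), iff_of_true heq rfl⟩

/-- characterization of eigenvalue increase and of the stopping condition
for the iteration `F_γ`. -/
theorem iteration_and_stopping_condition
    (d : ℕ) (γ : ℝ) (hγ : 0 < γ)
    (Wh : Submodule ℝ (Matrix (Fin d) (Fin d) ℝ))
    (hWhsym : ∀ X ∈ Wh, X.IsSymm)
    (PWh : Matrix (Fin d) (Fin d) ℝ →ₗ[ℝ] Matrix (Fin d) (Fin d) ℝ)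
    (hPWh : IsOrthProjOn Wh PWh)
    (X : Matrix (Fin d) (Fin d) ℝ) (hX : X ∈ Wh) (hXS : frobNorm X = 1)
    (u : Fin d → ℝ) (hu : ∑ i, u i ^ 2 = 1)
    (heig : X.mulVec u = lamTop X • u)
    (hpos : 0 < lamTop X)
    (Y : Matrix (Fin d) (Fin d) ℝ)
    (hY : Y = (frobNorm (PWh (X + γ • vecMulVec u u)))⁻¹ • PWh (X + γ • vecMulVec u u)) :
    ((0 < lamTop X ∧ lamTop X < frobNorm (PWh (vecMulVec u u))) ↔ lamTop X < lamTop Y) ∧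
      (lamTop X = frobNorm (PWh (vecMulVec u u)) ↔ Y = X) :=
  iteration_and_stopping_condition_general d γ hγ Wh PWh hPWh X hX hXS u hu heig hpos Y hY
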